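/- Let k ≥ 1, n ≥ 3, and let H be the subgraph of D_{k,n} induced by the union of the vertex sets of any t ≥ 3 distinct copies of D_{k-1,n}. Then H is 2-connected. -/

import Mathlib

open SimpleGraph
/-- Number of vertices of `D_{k,n}`. -/
def dcellT (n : ℕ) : ℕ → ℕ
  | 0 => n
  | k+1 => dcellT n k * (dcellT n k + 1)

/-- Vertex set of `D_{k,n}`. -/
def DCellVtx (n : ℕ) : ℕ → Type
  | 0 => Fin n
  | k+1 => Fin (dcellT n k + 1) × DCellVtx n k

/-- The uid of a vertex of `D_{k,n}`. -/
def dcellUid (n : ℕ) : (k : ℕ) → DCellVtx n k → ℕ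
  | 0, a => a.val
  | k+1, a => dcellUid n k a.2 + a.1.val * dcellT n k

/-- Adjacency in `D_{k,n}`: inside a common copy of `D_{k-1,n}` use the recursive rule;
between two copies use the DCell connection rule. -/
def dcellAdj (n : ℕ) : (k : ℕ) → DCellVtx n k → DCellVtx n k → Prop
  | 0, a, b => a ≠ b
  | k+1, a, b =>
      (a.1 = b.1 ∧ dcellAdj n k a.2 b.2) ∨
      (a.1.val < b.1.val ∧ a.1.val = dcellUid n k b.2 ∧ b.1.val = dcellUid n k a.2 + 1) ∨
      (b.1.val < a.1.val ∧ b.1.val = dcellUid n k a.2 ∧ a.1.val = dcellUid n k b.2 + 1)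

/-- The `k`-dimensional data center network with `n`-port switches. -/
def DCell (n k : ℕ) : SimpleGraph (DCellVtx n k) where
  Adj := dcellAdj n k
  symm := by
    induction k with
    | zero => exact ⟨fun a b h => h.symm⟩
    | succ k ih =>
      refine ⟨?_⟩
      rintro a b (⟨h1, h2⟩ | ⟨h1, h2, h3⟩ | ⟨h1, h2, h3⟩)
      · exact Or.inl ⟨h1.symm, ih.symm _ _ h2⟩
      · exact Or.inr (Or.inr ⟨h1, h2, h3⟩)
      · exact Or.inr (Or.inl ⟨h1, h2, h3⟩)
  loopless := by
    induction k with
    | zero => exact ⟨fun a h => h rfl⟩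
    | succ k ih =>
      refine ⟨?_⟩
      rintro a (⟨h1, h2⟩ | ⟨h1, h2, h3⟩ | ⟨h1, h2, h3⟩)
      · exact ih.irrefl a.2 h2
      · omega
      · omega

/-- Two vertices of `D_{k,n}` lie in a common copy of `K_n` (level-0 cell) iff all
coordinates except the last agree. -/
def dcellSameCell (n : ℕ) : (k : ℕ) → DCellVtx n k → DCellVtx n k → Prop
  | 0, _, _ => True
  | k+1, a, b => a.1 = b.1 ∧ dcellSameCell n k a.2 b.2
/-- The (vertex) connectivity of `G`: the least size of a set of vertices whose removal
disconnects the graph or reduces it to at most one vertex. -/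
noncomputable def vertexConnectivity {V : Type*} (G : SimpleGraph V) : ℕ :=
  sInf {m | ∃ S : Set V, S.ncard = m ∧
    (¬ (G.induce (Sᶜ : Set V)).Connected ∨ (Sᶜ : Set V).Subsingleton)}

/-- The edge connectivity of `G`: the least size of a set of edges whose removal
disconnects the graph. -/
noncomputable def edgeConnectivity {V : Type*} (G : SimpleGraph V) : ℕ :=
  sInf {m | ∃ F : Set (Sym2 V), F.ncard = m ∧ ¬ (G.deleteEdges F).Connected}

/-- `G` is `k`-connected. -/
def NConnected {V : Type*} (k : ℕ) (G : SimpleGraph V) : Prop :=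
  k < Nat.card V ∧ ∀ S : Set V, S.ncard < k → (G.induce (Sᶜ : Set V)).Connected

/-!
By induction on `k`, `D_{k,n}` stays connected after deleting one vertex `s`. Deleting `s` from a
union of at least three copies of `D_{k,n}` inside `D_{k+1,n}` leaves every copy connected, by
induction. Any two copies are joined by exactly one `(k+1)`-dimensional edge, and the edges
leaving one copy towards different copies have different endpoints there, so `s` lies on at
most one of these edges. Two copies whose joining edge contains `s` are still linked through a
third copy.
-/

namespace SimpleGraph

variable {V : Type*}

noncomputable def induceInduceIso (G : SimpleGraph V) (s : Set V) (t : Set s) :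
    (G.induce s).induce t ≃g G.induce (Subtype.val '' t) :=
  ⟨Equiv.Set.image _ t Subtype.val_injective, Iff.rfl⟩

end SimpleGraph

lemma Finset.exists_mem_ne_ne {α : Type*} [DecidableEq α] {s : Finset α} (hs : 2 < s.card)
    (a b : α) : ∃ c ∈ s, c ≠ a ∧ c ≠ b := by
  obtain ⟨c, hc, hcb⟩ := (s.erase a).exists_mem_ne
    (by have := s.pred_card_le_card_erase (a := a); omega) b
  exact ⟨c, Finset.mem_of_mem_erase hc, Finset.ne_of_mem_erase hc, hcb⟩

namespace DCell

lemma le_dcellT (n : ℕ) : ∀ k, n ≤ dcellT n k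
  | 0 => le_rfl
  | k + 1 => (le_dcellT n k).trans (Nat.le_mul_of_pos_right _ (Nat.succ_pos _))

def uidEquiv (n : ℕ) : (k : ℕ) → DCellVtx n k ≃ Fin (dcellT n k)
  | 0 => Equiv.refl _
  | k + 1 => ((Equiv.refl _).prodCongr (uidEquiv n k)).trans
      (finProdFinEquiv.trans (finCongr (Nat.mul_comm _ _)))

lemma val_uidEquiv (n : ℕ) : ∀ k (v : DCellVtx n k), (uidEquiv n k v : ℕ) = dcellUid n k v
  | 0, _ => rfl
  | k + 1, (i, w) => by
    show (uidEquiv n k w : ℕ) + dcellT n k * i = dcellUid n k w + i * dcellT n k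
    rw [val_uidEquiv, Nat.mul_comm]

variable {n k : ℕ}

instance : Finite (DCellVtx n k) := .of_equiv _ (uidEquiv n k).symm

/-- The copy of `D_{k,n}` that the `(k+1)`-dimensional edge at `v` leads to: in copy `i`, the
vertex with uid `m` is linked to the `m`-th copy other than `i`. -/
def crossCopy (v : DCellVtx n (k + 1)) : Fin (dcellT n k + 1) :=
  v.1.succAbove (uidEquiv n k v.2)

lemma adj_of_crossCopy_eq {a b : DCellVtx n (k + 1)} (ha : crossCopy a = b.1)
    (hb : crossCopy b = a.1) : (DCell n (k + 1)).Adj a b := by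
  obtain ⟨i, w⟩ := a
  obtain ⟨j, w'⟩ := b
  unfold crossCopy Fin.succAbove at ha hb
  show dcellAdj n (k + 1) (i, w) (j, w')
  split_ifs at ha hb <;>
    simp only [dcellAdj, Fin.ext_iff, Fin.lt_def, Fin.val_castSucc, Fin.val_succ,
      val_uidEquiv] at * <;> omega

lemma exists_crossCopy_eq {i j : Fin (dcellT n k + 1)} (hij : i ≠ j) :
    ∃ w : DCellVtx n k, crossCopy ((i, w) : DCellVtx n (k + 1)) = j := by
  obtain ⟨m, hm⟩ := Fin.exists_succAbove_eq hij.symm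
  exact ⟨(uidEquiv n k).symm m, by simp [crossCopy, hm]⟩

def copyEdge (v : DCellVtx n (k + 1)) : Sym2 (Fin (dcellT n k + 1)) :=
  s(v.1, crossCopy v)

lemma exists_adj_copyEdge_eq {i j : Fin (dcellT n k + 1)} (hij : i ≠ j) :
    ∃ a b : DCellVtx n (k + 1), a.1 = i ∧ b.1 = j ∧ copyEdge a = s(i, j) ∧
      copyEdge b = s(i, j) ∧ (DCell n (k + 1)).Adj a b := by
  obtain ⟨w, hw⟩ := exists_crossCopy_eq hij
  obtain ⟨w', hw'⟩ := exists_crossCopy_eq hij.symm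
  exact ⟨(i, w), (j, w'), rfl, rfl, by simp [copyEdge, hw], by simp [copyEdge, hw', Sym2.eq_swap],
    adj_of_crossCopy_eq hw hw'⟩

def copyHom (i : Fin (dcellT n k + 1)) : DCell n k →g DCell n (k + 1) :=
  ⟨Prod.mk i, fun h => Or.inl ⟨rfl, h⟩⟩

theorem preconnected_induce_copies_diff
    (ih : ∀ T : Set (DCellVtx n k), T.Subsingleton → ((DCell n k).induce Tᶜ).Preconnected)
    {I : Finset (Fin (dcellT n k + 1))} (hI : 3 ≤ I.card) {S : Set (DCellVtx n (k + 1))}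
    (hS : S.Subsingleton) : ((DCell n (k + 1)).induce ({v | v.1 ∈ I} \ S)).Preconnected := by
  set A : Set (DCellVtx n (k + 1)) := {v | v.1 ∈ I} \ S
  set H := (DCell n (k + 1)).induce A
  have within : ∀ u v : A, u.1.1 = v.1.1 → H.Reachable u v := by
    rintro ⟨⟨i, w⟩, hu⟩ ⟨⟨j, w'⟩, hv⟩ (rfl : i = j)
    have hT : (Prod.mk i ⁻¹' S).Subsingleton := hS.preimage (Prod.mk_right_injective i)
    have hmaps : Set.MapsTo (copyHom i) (Prod.mk i ⁻¹' S)ᶜ A := fun x hx => ⟨hu.1, hx⟩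
    exact (ih _ hT ⟨w, hu.2⟩ ⟨w', hv.2⟩).map (induceHom (copyHom i) hmaps)
  have bridge : ∀ i ∈ I, ∀ j ∈ I, i ≠ j → s(i, j) ∉ copyEdge '' S →
      ∃ a b : A, a.1.1 = i ∧ b.1.1 = j ∧ H.Adj a b := by
    intro i hi j hj hij hfree
    obtain ⟨a, b, rfl, rfl, ha, hb, hab⟩ := exists_adj_copyEdge_eq hij
    exact ⟨⟨a, hi, fun h => hfree ⟨a, h, ha⟩⟩, ⟨b, hj, fun h => hfree ⟨b, h, hb⟩⟩, rfl, rfl, hab⟩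
  have across : ∀ u v : A, s(u.1.1, v.1.1) ∉ copyEdge '' S → H.Reachable u v := by
    intro u v hfree
    by_cases h : u.1.1 = v.1.1
    · exact within u v h
    obtain ⟨a, b, ha, hb, hab⟩ := bridge _ u.2.1 _ v.2.1 h hfree
    exact (within u a ha.symm).trans (hab.reachable.trans (within b v hb))
  intro u v
  by_cases hfree : s(u.1.1, v.1.1) ∉ copyEdge '' S
  · exact across u v hfree
  have free_of_ne : ∀ {x y}, s(x, y) ≠ s(u.1.1, v.1.1) → s(x, y) ∉ copyEdge '' S :=
    fun hne h => hne ((hS.image _) h (not_not.mp hfree))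
  -- Only the pair of copies containing `u` and `v` is blocked, so route through a third copy.
  obtain ⟨l, hl, hlu, hlv⟩ := I.exists_mem_ne_ne hI u.1.1 v.1.1
  obtain ⟨-, b, -, rfl, -⟩ := bridge _ u.2.1 l hl hlu.symm
    (free_of_ne (by simp [hlu, hlv]))
  exact (across u b (free_of_ne (by simp [hlu, hlv]))).trans
    (across b v (free_of_ne (by simp [hlu, hlv])))

lemma card_le_natCard_copies (hn : 1 ≤ n) (I : Finset (Fin (dcellT n k + 1))) :
    I.card ≤ Nat.card {v : DCellVtx n (k + 1) | v.1 ∈ I} := by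
  obtain ⟨w⟩ : Nonempty (DCellVtx n k) := ⟨(uidEquiv n k).symm ⟨0, by linarith [le_dcellT n k]⟩⟩
  rw [← Nat.card_eq_finsetCard]
  exact Nat.card_le_card_of_injective (fun i => ⟨(i.1, w), i.2⟩)
    fun i j h => Subtype.ext (congrArg (fun x => x.1.1) h)

theorem preconnected_induce_compl (hn : 2 ≤ n) :
    ∀ (k : ℕ) (S : Set (DCellVtx n k)), S.Subsingleton → ((DCell n k).induce Sᶜ).Preconnected
  | 0, _, _ => fun u v => by
    by_cases h : u = v
    · exact h ▸ .refl _
    · exact Adj.reachable (G := (DCell n 0).induce _) fun huv => h (Subtype.ext huv)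
  | k + 1, S, hS => by
    have hI : 3 ≤ (Finset.univ : Finset (Fin (dcellT n k + 1))).card := by
      simp only [Finset.card_univ, Fintype.card_fin]
      linarith [le_dcellT n k]
    have hA : {v : DCellVtx n (k + 1) | v.1 ∈ Finset.univ} \ S = Sᶜ := by ext; simp
    rw [← hA]
    exact preconnected_induce_copies_diff (preconnected_induce_compl hn k) hI hS

end DCell

/-- The subgraph of `D_{k,n}` (`k ≥ 1`, `n ≥ 3`) induced by the union of at least
three distinct copies of `D_{k-1,n}` is 2-connected. -/
theorem stmt6 (n k : ℕ) (hn : 3 ≤ n) (I : Finset (Fin (dcellT n k + 1)))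
    (hI : 3 ≤ I.card) :
    NConnected 2 ((DCell n (k + 1)).induce {v : DCellVtx n (k + 1) | v.1 ∈ I}) := by
  set P : Set (DCellVtx n (k + 1)) := {v | v.1 ∈ I}
  have hcard : 2 < Nat.card P := lt_of_lt_of_le hI (DCell.card_le_natCard_copies (by omega) I)
  refine ⟨hcard, fun S hS => ?_⟩
  have hSsub : S.Subsingleton := Set.ncard_le_one_iff_subsingleton.mp (by omega)
  have hne : Sᶜ.Nonempty := Set.nonempty_compl.mpr fun h => by
    have := Set.ncard_univ P
    rw [← h] at this
    omega
  have hpre := DCell.preconnected_induce_copies_diff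
    (DCell.preconnected_induce_compl (by omega) k) hI (hSsub.image Subtype.val)
  have hP : Subtype.val '' Sᶜ = P \ Subtype.val '' S := by
    rw [Set.image_compl_eq_range_sdiff_image Subtype.val_injective, Subtype.range_coe]
  rw [← hP] at hpre
  have := hne.to_subtype
  exact ⟨(induceInduceIso _ P Sᶜ).preconnected_iff.mpr hpre⟩
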